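/- arXiv:2208.00905 — 5 statements merged into one kernel-verified Lean document; each statement's English description precedes it below -/
import Mathlib

section
/- Let {u_k}_{k=0}^{N-1} be any input sequence, x_0 ∈ ℝ^n any initial state, and {y_k}_{k=0}^{N-1} the resulting output of the system. Then for every k with n ≤ k ≤ N−1, M u_{[k−n,k]} = Σ_{j=0}^n d_j y_{k−j}. -/
/-!
Unrolling the recursion gives `y_{s+t} = C A^t x_s + ∑_{r+q=t} Γ_r u_{s+q}`. In
`∑_j d_j y_{k-j}` with `s = k - n` the state terms add up to `C (∑_j d_j A^{n-j}) x_s = 0`, and the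
input terms form the triple convolution `∑_{j+r+q=n} d_j Γ_r u_{s+q}`, which regrouped by `q` is
`∑_q M_{n-q} u_{s+q} = M u_{[k-n,k]}`.
-/

open Matrix Finset

noncomputable def stateSeq {n m : ℕ} (A : Matrix (Fin n) (Fin n) ℝ) (B : Matrix (Fin n) (Fin m) ℝ)
    (x0 : Fin n → ℝ) (u : ℕ → Fin m → ℝ) : ℕ → Fin n → ℝ
  | 0 => x0
  | k + 1 => A.mulVec (stateSeq A B x0 u k) + B.mulVec (u k)

/-- Output sequence `y_k = C x_k + D u_k` of the LTI system started at `x0` with input `u`. -/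
noncomputable def outputSeq {n m p : ℕ} (A : Matrix (Fin n) (Fin n) ℝ) (B : Matrix (Fin n) (Fin m) ℝ)
    (C : Matrix (Fin p) (Fin n) ℝ) (D : Matrix (Fin p) (Fin m) ℝ)
    (x0 : Fin n → ℝ) (u : ℕ → Fin m → ℝ) (k : ℕ) : Fin p → ℝ :=
  C.mulVec (stateSeq A B x0 u k) + D.mulVec (u k)

/-- Markov parameters: `Γ_0 = D`, `Γ_j = C A^(j-1) B` for `j ≥ 1`. -/
noncomputable def Markov {n m p : ℕ} (A : Matrix (Fin n) (Fin n) ℝ) (B : Matrix (Fin n) (Fin m) ℝ)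
    (C : Matrix (Fin p) (Fin n) ℝ) (D : Matrix (Fin p) (Fin m) ℝ) : ℕ → Matrix (Fin p) (Fin m) ℝ
  | 0 => D
  | j + 1 => C * A ^ j * B

/-- The matrix `M = [M_n ⋯ M_1 M_0]` with `M_j = ∑_{q=0}^j d_{j-q} Γ_q`; the block at
block-column `i` (from the left, `i = 0,…,n`) is `M_{n-i}`. -/
noncomputable def Mmat {n m p : ℕ} (A : Matrix (Fin n) (Fin n) ℝ) (B : Matrix (Fin n) (Fin m) ℝ)
    (C : Matrix (Fin p) (Fin n) ℝ) (D : Matrix (Fin p) (Fin m) ℝ) (d : ℕ → ℝ) :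
    Matrix (Fin p) (Fin (n + 1) × Fin m) ℝ :=
  Matrix.of fun i jl =>
    (∑ q ∈ Finset.range ((n - (jl.1 : ℕ)) + 1),
      d ((n - (jl.1 : ℕ)) - q) • Markov A B C D q) i jl.2

theorem Finset.Nat.sum_antidiagonal_antidiagonal_assoc {M : Type*} [AddCommMonoid M] (n : ℕ)
    (f : ℕ → ℕ → ℕ → M) :
    ∑ p ∈ antidiagonal n, ∑ q ∈ antidiagonal p.2, f p.1 q.1 q.2 =
      ∑ p ∈ antidiagonal n, ∑ q ∈ antidiagonal p.1, f q.1 q.2 p.2 := by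
  rw [sum_sigma', sum_sigma']
  refine sum_nbij' (fun x => ⟨(x.1.1 + x.2.1, x.2.2), (x.1.1, x.2.1)⟩)
    (fun x => ⟨(x.2.1, x.2.2 + x.1.2), (x.2.2, x.1.2)⟩) ?_ ?_ ?_ ?_ ?_ <;>
    simp +contextual [HasAntidiagonal.mem_antidiagonal, add_assoc]
  omega

theorem Matrix.of_blockRow_mulVec {ι κ ι' R : Type*} [Fintype κ] [Fintype ι']
    [NonUnitalNonAssocSemiring R] (M : κ → Matrix ι ι' R) (v : κ → ι' → R) :
    (of fun i (jl : κ × ι') => M jl.1 i jl.2) *ᵥ (fun jl => v jl.1 jl.2) = ∑ k, M k *ᵥ v k := by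
  ext i
  simp [mulVec, dotProduct, Fintype.sum_prod_type, Finset.sum_apply]

section LTI

variable {n m p : ℕ} (A : Matrix (Fin n) (Fin n) ℝ) (B : Matrix (Fin n) (Fin m) ℝ)
  (C : Matrix (Fin p) (Fin n) ℝ) (D : Matrix (Fin p) (Fin m) ℝ) (x0 : Fin n → ℝ) (u : ℕ → Fin m → ℝ)

theorem stateSeq_add (a t : ℕ) :
    stateSeq A B x0 u (a + t) =
      A ^ t *ᵥ stateSeq A B x0 u a + ∑ i ∈ range t, (A ^ (t - 1 - i) * B) *ᵥ u (a + i) := by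
  induction t generalizing a with
  | zero => simp
  | succ t ih =>
    rw [show a + (t + 1) = a + 1 + t by omega, ih, sum_range_succ', stateSeq]
    simp only [mulVec_add, mulVec_mulVec, ← pow_succ, Nat.sub_zero, add_zero, add_assoc,
      Nat.add_sub_cancel, Nat.sub_sub, Nat.add_comm 1, add_comm ((A ^ t * B) *ᵥ u a)]

theorem outputSeq_add (a t : ℕ) :
    outputSeq A B C D x0 u (a + t) =
      (C * A ^ t) *ᵥ stateSeq A B x0 u a +
        ∑ q ∈ antidiagonal t, Markov A B C D q.1 *ᵥ u (a + q.2) := by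
  rw [← Nat.sum_antidiagonal_swap]
  simp only [Prod.fst_swap, Prod.snd_swap]
  rw [Nat.sum_antidiagonal_eq_sum_range_succ (fun i r => Markov A B C D r *ᵥ u (a + i)),
    sum_range_succ, outputSeq, stateSeq_add, mulVec_add, mulVec_sum, mulVec_mulVec, Nat.sub_self,
    add_assoc]
  congr 2
  refine sum_congr rfl fun i hi => ?_
  rw [mulVec_mulVec, ← Matrix.mul_assoc, show t - i = t - 1 - i + 1 by grind]
  rfl

variable (d : ℕ → ℝ)

noncomputable def Mblock (T : ℕ) : Matrix (Fin p) (Fin m) ℝ :=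
  ∑ q ∈ range (T + 1), d (T - q) • Markov A B C D q

theorem Mblock_eq_sum_antidiagonal (T : ℕ) :
    Mblock A B C D d T = ∑ q ∈ antidiagonal T, d q.1 • Markov A B C D q.2 := by
  rw [← Nat.sum_antidiagonal_swap]
  exact (Nat.sum_antidiagonal_eq_sum_range_succ (fun r j => d j • Markov A B C D r) T).symm

theorem Mmat_mulVec_window (s : ℕ) :
    Mmat A B C D d *ᵥ (fun il : Fin (n + 1) × Fin m => u (s + il.1) il.2) =
      ∑ q ∈ antidiagonal n, Mblock A B C D d q.1 *ᵥ u (s + q.2) := by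
  refine (of_blockRow_mulVec (fun i : Fin (n + 1) => Mblock A B C D d (n - i))
    (fun i => u (s + i))).trans ?_
  rw [Fin.sum_univ_eq_sum_range (fun i => Mblock A B C D d (n - i) *ᵥ u (s + i)),
    ← Nat.sum_antidiagonal_swap]
  exact (Nat.sum_antidiagonal_eq_sum_range_succ
    (fun i T => Mblock A B C D d T *ᵥ u (s + i)) n).symm

theorem sum_antidiagonal_smul_mul_pow_mulVec_eq_zero
    (hCayley : ∑ j ∈ range (n + 1), d j • A ^ (n - j) = 0) (x : Fin n → ℝ) :
    ∑ q ∈ antidiagonal n, d q.1 • (C * A ^ q.2) *ᵥ x = 0 := by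
  simp_rw [← smul_mulVec, ← Matrix.mul_smul]
  rw [← sum_mulVec, ← Matrix.mul_sum,
    Nat.sum_antidiagonal_eq_sum_range_succ (fun j t => d j • A ^ t), hCayley,
    Matrix.mul_zero, zero_mulVec]

end LTI

theorem stmt_0_general {n m p : ℕ}
    (A : Matrix (Fin n) (Fin n) ℝ) (B : Matrix (Fin n) (Fin m) ℝ)
    (C : Matrix (Fin p) (Fin n) ℝ) (D : Matrix (Fin p) (Fin m) ℝ)
    (d : ℕ → ℝ)
    (hCayley : ∑ j ∈ Finset.range (n + 1), d j • A ^ (n - j) = 0)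
    (u : ℕ → Fin m → ℝ) (x0 : Fin n → ℝ)
    (k : ℕ) (hk : n ≤ k) :
    (Mmat A B C D d).mulVec (fun il : Fin (n + 1) × Fin m => u (k - n + (il.1 : ℕ)) il.2) =
      ∑ j ∈ Finset.range (n + 1), d j • outputSeq A B C D x0 u (k - j) := by
  set s := k - n
  have houtputs : ∑ j ∈ range (n + 1), d j • outputSeq A B C D x0 u (k - j) =
      ∑ q ∈ antidiagonal n, d q.1 • outputSeq A B C D x0 u (s + q.2) := by
    rw [Nat.sum_antidiagonal_eq_sum_range_succ (fun j t => d j • outputSeq A B C D x0 u (s + t))]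
    exact sum_congr rfl fun j hj => by rw [show k - j = s + (n - j) by grind]
  rw [Mmat_mulVec_window, houtputs]
  simp only [outputSeq_add, smul_add, sum_add_distrib, smul_sum,
    sum_antidiagonal_smul_mul_pow_mulVec_eq_zero A C d hCayley, zero_add]
  rw [Nat.sum_antidiagonal_antidiagonal_assoc n (fun j r q => d j • Markov A B C D r *ᵥ u (s + q))]
  simp only [Mblock_eq_sum_antidiagonal, sum_mulVec, smul_mulVec]

/-- for any input `u`, any initial state `x0`, with output `y`, for every
`k` with `n ≤ k ≤ N-1` we have `M u_{[k-n,k]} = ∑_{j=0}^n d_j y_{k-j}`. -/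
theorem stmt_0 {n m p : ℕ} (hn : 0 < n) (hm : 0 < m) (hp : 0 < p)
    (A : Matrix (Fin n) (Fin n) ℝ) (B : Matrix (Fin n) (Fin m) ℝ)
    (C : Matrix (Fin p) (Fin n) ℝ) (D : Matrix (Fin p) (Fin m) ℝ)
    (d : ℕ → ℝ) (hd0 : d 0 ≠ 0)
    (hdnorm : ∑ j ∈ Finset.range (n + 1), d j ^ 2 = 1)
    (hCayley : ∑ j ∈ Finset.range (n + 1), d j • A ^ (n - j) = 0)
    (N : ℕ) (u : ℕ → Fin m → ℝ) (x0 : Fin n → ℝ)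
    (k : ℕ) (hk : n ≤ k) (hkN : k ≤ N - 1) :
    (Mmat A B C D d).mulVec (fun il : Fin (n + 1) × Fin m => u (k - n + (il.1 : ℕ)) il.2) =
      ∑ j ∈ Finset.range (n + 1), d j • outputSeq A B C D x0 u (k - j) :=
  stmt_0_general A B C D d hCayley u x0 k hk
end

section
/- The following are equivalent: (i) the system (A,B,C,D) is output reachable; (ii) Γ = [D CB CAB ⋯ CA^{n−1}B] has full row rank p; (iii) M has full row rank p. -/
open Matrix Finset

/-- The matrix `Γ = [Γ_0 Γ_1 ⋯ Γ_n]`. -/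
noncomputable def Gammamat {n m p : ℕ} (A : Matrix (Fin n) (Fin n) ℝ) (B : Matrix (Fin n) (Fin m) ℝ)
    (C : Matrix (Fin p) (Fin n) ℝ) (D : Matrix (Fin p) (Fin m) ℝ) :
    Matrix (Fin p) (Fin (n + 1) × Fin m) ℝ :=
  Matrix.of fun i jl => Markov A B C D (jl.1 : ℕ) i jl.2

/-- Output reachability: every `ŷ ∈ ℝ^p` is reachable from `x_0 = 0` at some time `T`. -/
def OutputReachable {n m p : ℕ} (A : Matrix (Fin n) (Fin n) ℝ) (B : Matrix (Fin n) (Fin m) ℝ)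
    (C : Matrix (Fin p) (Fin n) ℝ) (D : Matrix (Fin p) (Fin m) ℝ) : Prop :=
  ∀ yhat : Fin p → ℝ, ∃ (T : ℕ) (u : ℕ → Fin m → ℝ),
    outputSeq A B C D 0 u T = yhat

/-!
The output at time `T` from `x₀ = 0` is `∑_{j ≤ T} Γ_j u_{T-j}`, so the reachable outputs span the
sum of the column spaces of all Markov parameters. By Cayley–Hamilton, `C A^k (∑ d_j A^{n-j}) B = 0`
is a recurrence of order `n` among `Γ_1, Γ_2, …` with leading coefficient `d_0 ≠ 0`, so all of these
column spaces lie in that of `Γ = [Γ_0 ⋯ Γ_n]`; hence output reachability is surjectivity of `Γ`.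
Finally `M_j = d_0 Γ_j + ∑_{q<j} d_{j-q} Γ_q` is a triangular change of blocks with invertible
diagonal, so `M` and `Γ` have the same column space.
-/

namespace Matrix

variable {α ι κ R : Type*}

theorem rank_eq_card_height_iff {K : Type*} [Field K] [Fintype α] [Fintype κ]
    (G : Matrix α κ K) : G.rank = Fintype.card α ↔ LinearMap.range G.mulVecLin = ⊤ := by
  rw [rank, Submodule.eq_top_iff_finrank_eq, Module.finrank_fintype_fun_eq_card]

theorem mulVec_eq_sum_submatrix_prodMk [NonUnitalNonAssocSemiring R] [Fintype ι] [Fintype κ]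
    (G : Matrix α (ι × κ) R) (v : ι × κ → R) :
    G *ᵥ v = ∑ j, G.submatrix id (Prod.mk j) *ᵥ fun l => v (j, l) := by
  ext i
  simp [mulVec, dotProduct, Fintype.sum_prod_type, Finset.sum_apply]

theorem range_mulVecLin_le_iff [CommSemiring R] [Fintype ι] [Fintype κ]
    {G : Matrix α (ι × κ) R} {S : Submodule R (α → R)} :
    LinearMap.range G.mulVecLin ≤ S ↔ ∀ j w, G.submatrix id (Prod.mk j) *ᵥ w ∈ S := by
  classical
  constructor
  · intro h j w
    apply h
    refine ⟨(1 : Matrix (ι × κ) (ι × κ) R).submatrix (Equiv.refl _) (Prod.mk j) *ᵥ w, ?_⟩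
    rw [mulVecLin_apply, mulVec_mulVec, mul_submatrix_one (Equiv.refl _)]
    rfl
  · rintro h _ ⟨v, rfl⟩
    rw [mulVecLin_apply, mulVec_eq_sum_submatrix_prodMk]
    exact Submodule.sum_mem _ fun j _ => h j _

end Matrix

section Recurrence

variable {K W : Type*} [Field K] [AddCommGroup W] [Module K W] {S : Submodule K W} {d : ℕ → K}
  {x : ℕ → W}

theorem mem_of_linear_recurrence {n : ℕ} (hd0 : d 0 ≠ 0)
    (hrec : ∀ i, ∑ j ∈ range (n + 1), d j • x (i + n - j) = 0) (hinit : ∀ k < n, x k ∈ S)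
    (k : ℕ) : x k ∈ S := by
  induction k using Nat.strong_induction_on with
  | _ k ih =>
  rcases lt_or_ge k n with hk | hk
  · exact hinit k hk
  obtain ⟨i, rfl⟩ : ∃ i, k = i + n := ⟨k - n, by omega⟩
  have hlead : d 0 • x (i + n) = -∑ j ∈ range n, d (j + 1) • x (i + n - (j + 1)) := by
    have := hrec i
    rw [sum_range_succ', Nat.sub_zero] at this
    exact eq_neg_of_add_eq_zero_right this
  rw [← Submodule.smul_mem_iff S hd0, hlead]
  refine S.neg_mem (S.sum_mem fun j hj => S.smul_mem _ (ih _ ?_))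
  have := mem_range.mp hj
  omega

theorem mem_of_convolution_mem {N : ℕ} (hd0 : d 0 ≠ 0)
    (hconv : ∀ j ≤ N, ∑ q ∈ range (j + 1), d (j - q) • x q ∈ S) (j : ℕ) (hj : j ≤ N) :
    x j ∈ S := by
  induction j using Nat.strong_induction_on with
  | _ j ih =>
  have hj' := hconv j hj
  rw [sum_range_succ, Nat.sub_self] at hj'
  have hlower : ∑ q ∈ range j, d (j - q) • x q ∈ S :=
    S.sum_mem fun q hq => S.smul_mem _ (ih q (mem_range.mp hq) (by have := mem_range.mp hq; omega))
  exact (Submodule.smul_mem_iff S hd0).mp ((S.add_mem_iff_right hlower).mp hj')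

end Recurrence

section LTI

variable {n m p : ℕ} (A : Matrix (Fin n) (Fin n) ℝ) (B : Matrix (Fin n) (Fin m) ℝ)
  (C : Matrix (Fin p) (Fin n) ℝ) (D : Matrix (Fin p) (Fin m) ℝ)

theorem stateSeq_zero_eq_sum (u : ℕ → Fin m → ℝ) (k : ℕ) :
    stateSeq A B 0 u k = ∑ j ∈ range k, (A ^ j * B) *ᵥ u (k - 1 - j) := by
  induction k with
  | zero => rfl
  | succ k ih =>
    rw [stateSeq, ih, sum_range_succ', mulVec_sum]
    congr 1
    · refine sum_congr rfl fun j _ => ?_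
      rw [mulVec_mulVec, ← Matrix.mul_assoc, ← pow_succ']
      congr 2
      omega
    · simp

theorem outputSeq_zero_eq_sum (u : ℕ → Fin m → ℝ) (T : ℕ) :
    outputSeq A B C D 0 u T = ∑ j ∈ range (T + 1), Markov A B C D j *ᵥ u (T - j) := by
  rw [outputSeq, stateSeq_zero_eq_sum, sum_range_succ', mulVec_sum, Nat.sub_zero]
  congr 1
  refine sum_congr rfl fun j _ => ?_
  rw [Markov, Matrix.mul_assoc, mulVec_mulVec, Nat.sub_sub, Nat.add_comm 1 j]

theorem exists_outputSeq_zero_eq_sum (T : ℕ) (w : ℕ → Fin m → ℝ) :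
    ∃ u, outputSeq A B C D 0 u T = ∑ j ∈ range (T + 1), Markov A B C D j *ᵥ w j := by
  refine ⟨fun k => w (T - k), ?_⟩
  rw [outputSeq_zero_eq_sum]
  refine sum_congr rfl fun j hj => ?_
  rw [Nat.sub_sub_self (Nat.lt_succ_iff.mp (mem_range.mp hj))]

theorem Gammamat_submatrix_prodMk (j : Fin (n + 1)) :
    (Gammamat A B C D).submatrix id (Prod.mk j) = Markov A B C D j :=
  rfl

theorem Mmat_submatrix_prodMk (d : ℕ → ℝ) (j : Fin (n + 1)) :
    (Mmat A B C D d).submatrix id (Prod.mk j)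
      = ∑ q ∈ range (n - j + 1), d (n - j - q) • Markov A B C D q := by
  ext i l
  simp [Mmat]

theorem Markov_mulVec_mem_range_Gammamat_of_le {k : ℕ} (hk : k ≤ n) (w : Fin m → ℝ) :
    Markov A B C D k *ᵥ w ∈ LinearMap.range (Gammamat A B C D).mulVecLin :=
  range_mulVecLin_le_iff.mp le_rfl (⟨k, Nat.lt_succ_of_le hk⟩ : Fin (n + 1)) w

theorem Markov_recurrence {d : ℕ → ℝ} (hCayley : ∑ j ∈ range (n + 1), d j • A ^ (n - j) = 0)
    (i : ℕ) : ∑ j ∈ range (n + 1), d j • Markov A B C D (i + n - j + 1) = 0 :=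
  calc ∑ j ∈ range (n + 1), d j • Markov A B C D (i + n - j + 1)
      = C * A ^ i * (∑ j ∈ range (n + 1), d j • A ^ (n - j)) * B := by
        rw [Matrix.mul_sum, Matrix.sum_mul]
        refine sum_congr rfl fun j hj => ?_
        rw [Markov, Nat.add_sub_assoc (Nat.lt_succ_iff.mp (mem_range.mp hj)), pow_add]
        simp only [Matrix.mul_smul, Matrix.smul_mul, Matrix.mul_assoc]
    _ = 0 := by rw [hCayley, Matrix.mul_zero, Matrix.zero_mul]

theorem Markov_mulVec_mem_range_Gammamat {d : ℕ → ℝ} (hd0 : d 0 ≠ 0)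
    (hCayley : ∑ j ∈ range (n + 1), d j • A ^ (n - j) = 0) (k : ℕ) (w : Fin m → ℝ) :
    Markov A B C D k *ᵥ w ∈ LinearMap.range (Gammamat A B C D).mulVecLin := by
  cases k with
  | zero => exact Markov_mulVec_mem_range_Gammamat_of_le A B C D (Nat.zero_le n) w
  | succ k =>
    refine mem_of_linear_recurrence (x := fun i => Markov A B C D (i + 1) *ᵥ w) hd0 (fun i => ?_)
      (fun j hj => Markov_mulVec_mem_range_Gammamat_of_le A B C D hj w) k
    simp only [← smul_mulVec, ← sum_mulVec, Markov_recurrence A B C D hCayley, zero_mulVec]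

theorem outputReachable_iff_range_Gammamat_eq_top {d : ℕ → ℝ} (hd0 : d 0 ≠ 0)
    (hCayley : ∑ j ∈ range (n + 1), d j • A ^ (n - j) = 0) :
    OutputReachable A B C D ↔ LinearMap.range (Gammamat A B C D).mulVecLin = ⊤ := by
  constructor
  · refine fun h => Submodule.eq_top_iff'.mpr fun y => ?_
    obtain ⟨T, u, rfl⟩ := h y
    rw [outputSeq_zero_eq_sum]
    exact Submodule.sum_mem _ fun j _ => Markov_mulVec_mem_range_Gammamat A B C D hd0 hCayley _ _
  · intro h y
    obtain ⟨v, rfl⟩ : y ∈ LinearMap.range (Gammamat A B C D).mulVecLin := h ▸ Submodule.mem_top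
    obtain ⟨u, hu⟩ := exists_outputSeq_zero_eq_sum A B C D n
      fun j l => if hj : j < n + 1 then v (⟨j, hj⟩, l) else 0
    refine ⟨n, u, ?_⟩
    rw [hu, mulVecLin_apply, mulVec_eq_sum_submatrix_prodMk, ← Fin.sum_univ_eq_sum_range]
    simp only [Fin.is_lt, dif_pos, Gammamat_submatrix_prodMk]

theorem range_Mmat_eq_range_Gammamat {d : ℕ → ℝ} (hd0 : d 0 ≠ 0) :
    LinearMap.range (Mmat A B C D d).mulVecLin = LinearMap.range (Gammamat A B C D).mulVecLin := by
  apply le_antisymm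
  · refine range_mulVecLin_le_iff.mpr fun j w => ?_
    rw [Mmat_submatrix_prodMk, sum_mulVec]
    refine Submodule.sum_mem _ fun q hq => ?_
    rw [smul_mulVec]
    refine Submodule.smul_mem _ _ (Markov_mulVec_mem_range_Gammamat_of_le A B C D ?_ w)
    have := mem_range.mp hq
    omega
  · refine range_mulVecLin_le_iff.mpr fun j w => ?_
    refine mem_of_convolution_mem (x := fun q => Markov A B C D q *ᵥ w) hd0 (fun k hk => ?_) j
      (Nat.lt_succ_iff.mp j.isLt)
    have hblock := (range_mulVecLin_le_iff (G := Mmat A B C D d)).mp le_rfl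
      (⟨n - k, by omega⟩ : Fin (n + 1)) w
    simpa only [Mmat_submatrix_prodMk, sum_mulVec, smul_mulVec, Nat.sub_sub_self hk] using hblock

end LTI

theorem stmt_7_general {n m p : ℕ}
    (A : Matrix (Fin n) (Fin n) ℝ) (B : Matrix (Fin n) (Fin m) ℝ)
    (C : Matrix (Fin p) (Fin n) ℝ) (D : Matrix (Fin p) (Fin m) ℝ)
    (d : ℕ → ℝ) (hd0 : d 0 ≠ 0)
    (hCayley : ∑ j ∈ Finset.range (n + 1), d j • A ^ (n - j) = 0) :
    (OutputReachable A B C D ↔ (Gammamat A B C D).rank = p) ∧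
    ((Gammamat A B C D).rank = p ↔ (Mmat A B C D d).rank = p) := by
  refine ⟨?_, ?_⟩
  · rw [outputReachable_iff_range_Gammamat_eq_top A B C D hd0 hCayley, ← rank_eq_card_height_iff,
      Fintype.card_fin]
  · rw [rank, rank, range_Mmat_eq_range_Gammamat A B C D hd0]

/-- output reachability ↔ `Γ` has full row rank `p` ↔ `M` has full row rank `p`. -/
theorem stmt_7 {n m p : ℕ} (hn : 0 < n) (hm : 0 < m) (hp : 0 < p)
    (A : Matrix (Fin n) (Fin n) ℝ) (B : Matrix (Fin n) (Fin m) ℝ)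
    (C : Matrix (Fin p) (Fin n) ℝ) (D : Matrix (Fin p) (Fin m) ℝ)
    (d : ℕ → ℝ) (hd0 : d 0 ≠ 0)
    (hdnorm : ∑ j ∈ Finset.range (n + 1), d j ^ 2 = 1)
    (hCayley : ∑ j ∈ Finset.range (n + 1), d j • A ^ (n - j) = 0) :
    (OutputReachable A B C D ↔ (Gammamat A B C D).rank = p) ∧
    ((Gammamat A B C D).rank = p ↔ (Mmat A B C D d).rank = p) :=
  stmt_7_general A B C D d hd0 hCayley
end

section
/- For every symmetric positive definite K_u ∈ ℝ^{m(n+1)×m(n+1)}, the matrix inequality M K_u M^T ⪰ λ_min(K_u) · σ_min(D̄)^2 · Γ Γ^T holds in the Loewner order, where λ_min denotes the minimum eigenvalue and σ_min the minimum singular value; in particular, since d_0 ≠ 0 implies D̄ is invertible, σ_min(D̄) > 0. -/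
open Matrix Finset

/-- The matrix `D̄` with `D̄_{i,j} = d_{n-i-j}` for `i + j ≤ n`, zero otherwise. -/
noncomputable def Dbar (n : ℕ) (d : ℕ → ℝ) : Matrix (Fin (n + 1)) (Fin (n + 1)) ℝ :=
  Matrix.of fun i j =>
    if (i : ℕ) + (j : ℕ) ≤ n then d (n - (i : ℕ) - (j : ℕ)) else 0

/-- The set of (real) eigenvalues of a square matrix. -/
def eigSet {k : Type} [Fintype k] (A : Matrix k k ℝ) : Set ℝ :=
  {t : ℝ | ∃ v : k → ℝ, v ≠ 0 ∧ A.mulVec v = t • v}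

/-- Minimum (real) eigenvalue `λ_min` of a square matrix. -/
noncomputable def lamMin {k : Type} [Fintype k] (A : Matrix k k ℝ) : ℝ :=
  sInf (eigSet A)

/-- Minimum singular value `σ_min(A) = √(λ_min(Aᵀ A))`. -/
noncomputable def sigmaMin {k l : Type} [Fintype k] [Fintype l] (A : Matrix k l ℝ) : ℝ :=
  Real.sqrt (lamMin (Aᴴ * A))

/-! Convolving the Markov parameters with `d` is right multiplication by a Kronecker product,
`M = Γ (D̄ ⊗ I_m)`. Since `λ_min(S) I ⪯ S` for symmetric `S` and congruence preserves the
Loewner order, `M K_u Mᵀ ⪰ λ_min(K_u) Γ (D̄ D̄ᵀ ⊗ I_m) Γᵀ ⪰ λ_min(K_u) λ_min(D̄ᵀ D̄) Γ Γᵀ`, where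
`D̄ D̄ᵀ = D̄ᵀ D̄` because the Hankel matrix `D̄` is symmetric. Reversing its columns makes `D̄`
triangular with diagonal `d_0`, so `D̄` is invertible and `σ_min(D̄) > 0`. -/

open scoped MatrixOrder Kronecker

section Spectrum

variable {k : Type} [Fintype k] [DecidableEq k]

theorem eigSet_eq_spectrum (S : Matrix k k ℝ) : eigSet S = spectrum ℝ S := by
  ext t
  rw [← Matrix.spectrum_toLin', ← Module.End.hasEigenvalue_iff_mem_spectrum]
  constructor
  · rintro ⟨v, hv, hSv⟩
    exact Module.End.hasEigenvalue_of_hasEigenvector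
      ⟨Module.End.mem_eigenspace_iff.mpr (by simpa using hSv), hv⟩
  · intro h
    obtain ⟨v, hv, hv0⟩ := h.exists_hasEigenvector
    exact ⟨v, hv0, by simpa using Module.End.mem_eigenspace_iff.mp hv⟩

theorem lamMin_le_of_mem_spectrum {S : Matrix k k ℝ} {t : ℝ} (ht : t ∈ spectrum ℝ S) :
    lamMin S ≤ t := by
  rw [lamMin, eigSet_eq_spectrum]
  exact csInf_le S.finite_real_spectrum.bddBelow ht

theorem lamMin_mem_spectrum [Nonempty k] {S : Matrix k k ℝ} (hS : S.IsHermitian) :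
    lamMin S ∈ spectrum ℝ S := by
  rw [lamMin, eigSet_eq_spectrum]
  refine Set.Nonempty.csInf_mem ?_ S.finite_real_spectrum
  rw [hS.spectrum_real_eq_range_eigenvalues]
  exact Set.range_nonempty _

theorem Matrix.PosSemidef.lamMin_nonneg {S : Matrix k k ℝ} (hS : S.PosSemidef) : 0 ≤ lamMin S := by
  refine Real.sInf_nonneg fun t ht => ?_
  rw [eigSet_eq_spectrum] at ht
  exact (Matrix.posSemidef_iff_isHermitian_and_spectrum_nonneg.mp hS).2 ht

theorem Matrix.PosDef.lamMin_pos [Nonempty k] {S : Matrix k k ℝ} (hS : S.PosDef) :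
    0 < lamMin S := by
  obtain ⟨i, hi⟩ := hS.isHermitian.spectrum_real_eq_range_eigenvalues ▸
    lamMin_mem_spectrum hS.isHermitian
  exact hi ▸ hS.eigenvalues_pos i

theorem Matrix.IsHermitian.lamMin_smul_one_le {S : Matrix k k ℝ} (hS : S.IsHermitian) :
    lamMin S • 1 ≤ S := by
  refine Matrix.posSemidef_iff_isHermitian_and_spectrum_nonneg.mpr ⟨?_, fun t ht => ?_⟩
  · exact hS.sub (Matrix.isHermitian_one.smul (IsSelfAdjoint.all _))
  · rw [← Algebra.algebraMap_eq_smul_one, ← spectrum.sub_singleton_eq] at ht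
    obtain ⟨s, hs, _, rfl, rfl⟩ := ht
    exact sub_nonneg.mpr (lamMin_le_of_mem_spectrum hs)

end Spectrum

theorem Matrix.smul_mul_conjTranspose_le {k p : Type} [Fintype k] [Fintype p] [DecidableEq k]
    {S : Matrix k k ℝ} {c : ℝ} (h : c • 1 ≤ S) (X : Matrix p k ℝ) :
    c • (X * Xᴴ) ≤ X * S * Xᴴ := by
  have := (Matrix.le_iff.mp h).mul_mul_conjTranspose_same X
  rw [Matrix.le_iff]
  simpa [Matrix.mul_sub, Matrix.sub_mul] using this

theorem Matrix.smul_one_le_kronecker_one {k l : Type} [Fintype k] [Fintype l] [DecidableEq k]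
    [DecidableEq l] {S : Matrix k k ℝ} {c : ℝ} (h : c • 1 ≤ S) :
    c • 1 ≤ S ⊗ₖ (1 : Matrix l l ℝ) := by
  have hsplit : S ⊗ₖ (1 : Matrix l l ℝ) = (S - c • 1) ⊗ₖ (1 : Matrix l l ℝ) + c • 1 := by
    conv_lhs => rw [← sub_add_cancel S (c • 1)]
    rw [Matrix.add_kronecker, Matrix.smul_kronecker, Matrix.one_kronecker_one]
  rw [Matrix.le_iff, hsplit, add_sub_cancel_right]
  exact (Matrix.le_iff.mp h).kronecker Matrix.PosSemidef.one

theorem Dbar_transpose (n : ℕ) (d : ℕ → ℝ) : (Dbar n d)ᵀ = Dbar n d := by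
  ext i j
  simp only [transpose_apply, Dbar, of_apply, add_comm (j : ℕ), Nat.sub_right_comm]

theorem det_Dbar_ne_zero {n : ℕ} {d : ℕ → ℝ} (hd0 : d 0 ≠ 0) : (Dbar n d).det ≠ 0 := by
  have hrev : ((Dbar n d).submatrix id Fin.revPerm).det = d 0 ^ (n + 1) := by
    rw [det_of_isUpperTriangular]
    · simp only [submatrix_apply, id_eq, Fin.revPerm_apply, Dbar, of_apply, Fin.val_rev]
      refine (Finset.prod_congr rfl fun i _ => ?_).trans (Fin.prod_const (n + 1) (d 0))
      rw [if_pos (by omega)]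
      congr 1
      omega
    · intro i j hij
      have hji : (j : ℕ) < i := hij
      simp only [submatrix_apply, id_eq, Fin.revPerm_apply, Dbar, of_apply, Fin.val_rev]
      rw [if_neg (by omega)]
  rw [det_permute'] at hrev
  intro h
  rw [h, mul_zero] at hrev
  exact pow_ne_zero _ hd0 hrev.symm

theorem Mmat_apply {n m p : ℕ} (A : Matrix (Fin n) (Fin n) ℝ) (B : Matrix (Fin n) (Fin m) ℝ)
    (C : Matrix (Fin p) (Fin n) ℝ) (D : Matrix (Fin p) (Fin m) ℝ) (d : ℕ → ℝ)
    (i : Fin p) (j : Fin (n + 1)) (l : Fin m) :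
    Mmat A B C D d i (j, l) = ∑ a : Fin (n + 1), Dbar n d a j * Markov A B C D a i l := by
  simp only [Mmat, Dbar, of_apply, Matrix.sum_apply, Matrix.smul_apply, ite_mul, zero_mul]
  rw [Fin.sum_univ_eq_sum_range
    (fun a => if a + (j : ℕ) ≤ n then d (n - a - j) * Markov A B C D a i l else 0),
    ← Finset.sum_filter]
  have hrange : (range (n + 1)).filter (· + (j : ℕ) ≤ n) = range (n - j + 1) := by
    ext a
    simp only [mem_filter, mem_range]
    omega
  rw [hrange]
  exact Finset.sum_congr rfl fun a _ => by rw [smul_eq_mul, Nat.sub_right_comm]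

theorem Mmat_eq_Gammamat_mul_kronecker {n m p : ℕ} (A : Matrix (Fin n) (Fin n) ℝ)
    (B : Matrix (Fin n) (Fin m) ℝ) (C : Matrix (Fin p) (Fin n) ℝ) (D : Matrix (Fin p) (Fin m) ℝ)
    (d : ℕ → ℝ) :
    Mmat A B C D d = Gammamat A B C D * (Dbar n d ⊗ₖ (1 : Matrix (Fin m) (Fin m) ℝ)) := by
  ext i ⟨j, l⟩
  rw [Mmat_apply]
  simp only [Matrix.mul_apply, Fintype.sum_prod_type, Gammamat, kroneckerMap_apply, of_apply,
    one_apply, mul_ite, mul_one, mul_zero, Finset.sum_ite_eq', Finset.mem_univ, if_true]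
  exact Finset.sum_congr rfl fun a _ => mul_comm _ _

theorem stmt_9_general {n m p : ℕ}
    (A : Matrix (Fin n) (Fin n) ℝ) (B : Matrix (Fin n) (Fin m) ℝ)
    (C : Matrix (Fin p) (Fin n) ℝ) (D : Matrix (Fin p) (Fin m) ℝ)
    (d : ℕ → ℝ) (hd0 : d 0 ≠ 0)
    (Ku : Matrix (Fin (n + 1) × Fin m) (Fin (n + 1) × Fin m) ℝ) (hKu : Ku.PosDef) :
    (Mmat A B C D d * Ku * (Mmat A B C D d)ᴴ -
        (lamMin Ku * sigmaMin (Dbar n d) ^ 2) •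
          (Gammamat A B C D * (Gammamat A B C D)ᴴ)).PosSemidef ∧
      0 < sigmaMin (Dbar n d) := by
  set Γ := Gammamat A B C D
  set T := Dbar n d
  set K := T ⊗ₖ (1 : Matrix (Fin m) (Fin m) ℝ)
  have hTT : (Tᴴ * T).PosDef := PosDef.conjTranspose_mul_self T <|
    mulVec_injective_iff_isUnit.mpr <| (isUnit_iff_isUnit_det T).mpr (det_Dbar_ne_zero hd0).isUnit
  have hKK : K * Kᴴ = (Tᴴ * T) ⊗ₖ 1 := by
    rw [conjTranspose_kronecker, ← mul_kronecker_mul, conjTranspose_one, mul_one,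
      conjTranspose_eq_transpose_of_trivial, Dbar_transpose]
  have hσ : sigmaMin T ^ 2 = lamMin (Tᴴ * T) := Real.sq_sqrt hTT.lamMin_pos.le
  refine ⟨Matrix.le_iff.mp ?_, Real.sqrt_pos.mpr hTT.lamMin_pos⟩
  rw [Mmat_eq_Gammamat_mul_kronecker, hσ]
  calc (lamMin Ku * lamMin (Tᴴ * T)) • (Γ * Γᴴ)
      = lamMin Ku • (lamMin (Tᴴ * T) • (Γ * Γᴴ)) := mul_smul ..
    _ ≤ lamMin Ku • (Γ * ((Tᴴ * T) ⊗ₖ 1) * Γᴴ) :=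
      smul_le_smul_of_nonneg_left (smul_mul_conjTranspose_le
        (smul_one_le_kronecker_one hTT.isHermitian.lamMin_smul_one_le) Γ)
        hKu.posSemidef.lamMin_nonneg
    _ = lamMin Ku • (Γ * K * (Γ * K)ᴴ) := by
      rw [← hKK, conjTranspose_mul, Matrix.mul_assoc, Matrix.mul_assoc, Matrix.mul_assoc]
    _ ≤ Γ * K * Ku * (Γ * K)ᴴ := smul_mul_conjTranspose_le hKu.isHermitian.lamMin_smul_one_le _

/-- `M K_u Mᵀ ⪰ λ_min(K_u) σ_min(D̄)² Γ Γᵀ`, and `σ_min(D̄) > 0` since `d_0 ≠ 0`. -/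
theorem stmt_9 {n m p : ℕ} (hn : 0 < n) (hm : 0 < m) (hp : 0 < p)
    (A : Matrix (Fin n) (Fin n) ℝ) (B : Matrix (Fin n) (Fin m) ℝ)
    (C : Matrix (Fin p) (Fin n) ℝ) (D : Matrix (Fin p) (Fin m) ℝ)
    (d : ℕ → ℝ) (hd0 : d 0 ≠ 0)
    (hdnorm : ∑ j ∈ Finset.range (n + 1), d j ^ 2 = 1)
    (Ku : Matrix (Fin (n + 1) × Fin m) (Fin (n + 1) × Fin m) ℝ) (hKu : Ku.PosDef) :
    (Mmat A B C D d * Ku * (Mmat A B C D d)ᴴ -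
        (lamMin Ku * sigmaMin (Dbar n d) ^ 2) •
          (Gammamat A B C D * (Gammamat A B C D)ᴴ)).PosSemidef ∧
      0 < sigmaMin (Dbar n d) :=
  stmt_9_general A B C D d hd0 Ku hKu
end

section
/- Suppose the first r Markov parameters vanish: Γ_i = 0 for i = 0,…,r−1 (with 0 ≤ r ≤ n). Then for every input sequence {u_k} and every k ≥ n, M u_{[k−n,k]} = M̄_r u_{[k−n,k−r]}, where M̄_r = (d̄_r^T ⊗ I_p) Γ̄_r. -/
open Matrix Kronecker Finset

/-- Block lower-triangular Toeplitz matrix `Γ̄_r` with `(i,j)`-block `Γ_{r+i-j}` for `j ≤ i`. -/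
noncomputable def Gammabarr {n m p : ℕ} (A : Matrix (Fin n) (Fin n) ℝ) (B : Matrix (Fin n) (Fin m) ℝ)
    (C : Matrix (Fin p) (Fin n) ℝ) (D : Matrix (Fin p) (Fin m) ℝ) (r : ℕ) :
    Matrix (Fin (n + 1 - r) × Fin p) (Fin (n + 1 - r) × Fin m) ℝ :=
  Matrix.of fun ir jl =>
    if (jl.1 : ℕ) ≤ (ir.1 : ℕ) then Markov A B C D (r + (ir.1 : ℕ) - (jl.1 : ℕ)) ir.2 jl.2 else 0

/-- `M̄_r = (d̄_rᵀ ⊗ I_p) Γ̄_r`, where `d̄_r = (d_{n-r}, …, d_1, d_0)`. -/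
noncomputable def Mbarr {n m p : ℕ} (A : Matrix (Fin n) (Fin n) ℝ) (B : Matrix (Fin n) (Fin m) ℝ)
    (C : Matrix (Fin p) (Fin n) ℝ) (D : Matrix (Fin p) (Fin m) ℝ) (d : ℕ → ℝ) (r : ℕ) :
    Matrix (Fin p) (Fin (n + 1 - r) × Fin m) ℝ :=
  ((((Matrix.of fun (_ : Fin 1) (i : Fin (n + 1 - r)) => d (n - r - (i : ℕ))) ⊗ₖ
      (1 : Matrix (Fin p) (Fin p) ℝ)) * Gammabarr A B C D r).submatrix
    (fun i : Fin p => ((0 : Fin 1), i)) id)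

/-! Since `Γ_q = 0` for `q < r`, every block `M_j = ∑_q d_{j-q} Γ_q` of `M` equals
`∑_t d_{j-r-t} Γ_{r+t}`. Hence the last `r` blocks `M_{r-1}, …, M_0` of `M` vanish, and each
remaining block `M_{n-a}` is block `a` of `M̄_r = (d̄_rᵀ ⊗ I_p) Γ̄_r`; so both sides only see
`u_{[k-n,k-r]}`. -/

theorem Finset.sum_range_sub_smul_eq_sum_range_add_of_eq_zero {R M : Type*} [AddCommMonoid M]
    [SMulZeroClass R M]
    (d : ℕ → R) (Γ : ℕ → M) {r : ℕ} (hΓ : ∀ i < r, Γ i = 0) (j : ℕ) :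
    ∑ q ∈ range (j + 1), d (j - q) • Γ q = ∑ t ∈ range (j + 1 - r), d (j - r - t) • Γ (r + t) := by
  rcases le_or_gt r (j + 1) with hrj | hrj
  · conv_lhs => rw [← Nat.add_sub_cancel' hrj, sum_range_add]
    rw [sum_eq_zero fun q hq => by rw [hΓ q (mem_range.mp hq), smul_zero], zero_add]
    simp only [Nat.sub_sub]
  · rw [Nat.sub_eq_zero_of_le hrj.le, sum_range_zero]
    exact sum_eq_zero fun q hq => by rw [hΓ q (by grind), smul_zero]

theorem Matrix.mulVec_eq_submatrix_mulVec_of_eq_zero {κ ι ι' R : Type*} [Fintype ι] [Fintype ι']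
    [NonUnitalNonAssocSemiring R] (M : Matrix κ ι R) (e : ι' ↪ ι)
    (hM : ∀ i, ∀ j ∉ Set.range e, M i j = 0) (v : ι → R) :
    M *ᵥ v = M.submatrix id e *ᵥ (v ∘ e) := by
  ext i
  exact (Fintype.sum_of_injective e e.injective _ _
    (fun j hj => by simp [hM i j hj]) fun _ => rfl).symm

theorem Mbarr_apply {n m p : ℕ} (A : Matrix (Fin n) (Fin n) ℝ) (B : Matrix (Fin n) (Fin m) ℝ)
    (C : Matrix (Fin p) (Fin n) ℝ) (D : Matrix (Fin p) (Fin m) ℝ) (d : ℕ → ℝ) (r : ℕ)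
    (i : Fin p) (a : Fin (n + 1 - r)) (l : Fin m) :
    Mbarr A B C D d r i (a, l) =
      (∑ t ∈ range (n - a + 1 - r), d (n - a - r - t) • Markov A B C D (r + t)) i l := by
  simp only [Mbarr, Gammabarr, submatrix_apply, mul_apply, kroneckerMap_apply, of_apply, one_apply,
    Fintype.sum_prod_type, id, mul_ite, ite_mul, mul_one, mul_zero, zero_mul, sum_ite_irrel,
    sum_const_zero, sum_ite_eq, mem_univ, if_true, Matrix.sum_apply, Matrix.smul_apply, smul_eq_mul]
  rw [Fin.sum_univ_eq_sum_range (fun b => if (a : ℕ) ≤ b then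
      d (n - r - b) * Markov A B C D (r + b - a) i l else 0), ← sum_filter,
    show (range (n + 1 - r)).filter (fun b => (a : ℕ) ≤ b) = Ico (a : ℕ) (n + 1 - r) by
      ext; simp [and_comm], sum_Ico_eq_sum_range]
  rw [show n + 1 - r - a = n - a + 1 - r by omega]
  exact sum_congr rfl fun t _ => by
    rw [show n - r - (a + t) = n - a - r - t by omega, show r + (a + t) - a = r + t by omega]

theorem stmt_11_general {n m p : ℕ}
    (A : Matrix (Fin n) (Fin n) ℝ) (B : Matrix (Fin n) (Fin m) ℝ)
    (C : Matrix (Fin p) (Fin n) ℝ) (D : Matrix (Fin p) (Fin m) ℝ)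
    (d : ℕ → ℝ)
    (r : ℕ)
    (hvanish : ∀ i < r, Markov A B C D i = 0) :
    ∀ (u : ℕ → Fin m → ℝ) (k : ℕ), n ≤ k →
      (Mmat A B C D d).mulVec (fun il : Fin (n + 1) × Fin m => u (k - n + (il.1 : ℕ)) il.2) =
        (Mbarr A B C D d r).mulVec
          (fun il : Fin (n + 1 - r) × Fin m => u (k - n + (il.1 : ℕ)) il.2) := by
  intro u k _
  have hM (a : ℕ) :=
    sum_range_sub_smul_eq_sum_range_add_of_eq_zero d (Markov A B C D) hvanish (n - a)
  let e := (Fin.castLEEmb (Nat.sub_le (n + 1) r)).prodMap (Function.Embedding.refl (Fin m))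
  rw [mulVec_eq_submatrix_mulVec_of_eq_zero _ e]
  · congr 1
    ext i ⟨a, l⟩
    simp only [Mmat, submatrix_apply, of_apply, id, e, Mbarr_apply, hM,
      Function.Embedding.coe_prodMap, Prod.map_apply, Fin.castLEEmb_apply, Fin.val_castLE,
      Function.Embedding.refl_apply]
  · rintro i ⟨a, l⟩ ha
    have hra : n - a + 1 - r = 0 := by
      by_contra
      exact ha ⟨(⟨a, by omega⟩, l), rfl⟩
    simp [Mmat, hM, hra]

/-- if `Γ_i = 0` for `i = 0,…,r-1`, then for every input `u` and every `k ≥ n`,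
`M u_{[k-n,k]} = M̄_r u_{[k-n,k-r]}`. -/
theorem stmt_11 {n m p : ℕ} (hn : 0 < n) (hm : 0 < m) (hp : 0 < p)
    (A : Matrix (Fin n) (Fin n) ℝ) (B : Matrix (Fin n) (Fin m) ℝ)
    (C : Matrix (Fin p) (Fin n) ℝ) (D : Matrix (Fin p) (Fin m) ℝ)
    (d : ℕ → ℝ) (hd0 : d 0 ≠ 0)
    (hdnorm : ∑ j ∈ Finset.range (n + 1), d j ^ 2 = 1)
    (r : ℕ) (hr : r ≤ n)
    (hvanish : ∀ i < r, Markov A B C D i = 0) :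
    ∀ (u : ℕ → Fin m → ℝ) (k : ℕ), n ≤ k →
      (Mmat A B C D d).mulVec (fun il : Fin (n + 1) × Fin m => u (k - n + (il.1 : ℕ)) il.2) =
        (Mbarr A B C D d r).mulVec
          (fun il : Fin (n + 1 - r) × Fin m => u (k - n + (il.1 : ℕ)) il.2) :=
  stmt_11_general A B C D d r hvanish
end

section
/- Let {u_k}_{k=0}^{N−1} be an input sequence, x_0 ∈ ℝ^n an initial state, {x_k} the resulting state sequence and {y_k} the resulting output sequence, and let 1 ≤ L ≤ N. If the stacked matrix [H_1(x_{[0,N−L]}); H_L(u)] (whose k-th column is (x_k; u_{[k,k+L−1]}) for k = 0,…,N−L) has rank mL + n, then the column image of the stacked matrix [H_L(u); H_L(y)] equals the set 𝒯_L of all length-L input-output trajectories of the system. -/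
open Matrix Finset

/-- The set `𝒯_L` of length-`L` input-output trajectories of the system: stacked vectors
`(ū; ȳ)` such that `ȳ` is generated by the system from some initial state under input `ū`. -/
def TrajSet {n m p : ℕ} (A : Matrix (Fin n) (Fin n) ℝ) (B : Matrix (Fin n) (Fin m) ℝ)
    (C : Matrix (Fin p) (Fin n) ℝ) (D : Matrix (Fin p) (Fin m) ℝ) (L : ℕ) :
    Set ((Fin L × Fin m) ⊕ (Fin L × Fin p) → ℝ) :=
  {w | ∃ (xb : Fin n → ℝ) (ub : ℕ → Fin m → ℝ),
      (∀ (i : Fin L) (l : Fin m), w (Sum.inl (i, l)) = ub (i : ℕ) l) ∧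
      (∀ (i : Fin L) (j : Fin p), w (Sum.inr (i, j)) = outputSeq A B C D xb ub (i : ℕ) j)}

/-!
The response of the system is linear in `(x₀, u)` and causal, and a time shift by `k` turns it
into the response from `x_k` to the shifted input. Hence the `k`-th column of `[H_L(u); H_L(y)]`
is the input-output window of the response from `x_k` to `u_{k+·}`, and the combination of
columns with weights `c` is the window of the response from `∑ c_k x_k` to `∑ c_k u_{k+·}`,
so it lies in `𝒯_L`. Conversely, the rank condition makes `[H_1(x); H_L(u)]` onto: for a
trajectory generated by `(x̄₀, ū)` there are weights with `∑ c_k x_k = x̄₀` and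
`∑ c_k u_{k+·} = ū` on `[0, L-1]`, and by causality the combination of columns with these
weights is that trajectory.
-/

theorem Matrix.mulVec_surjective_of_rank_eq_card {K ι κ : Type*} [Field K] [Fintype ι]
    [Fintype κ] (M : Matrix ι κ K) (h : M.rank = Fintype.card ι) :
    Function.Surjective M.mulVec :=
  LinearMap.range_eq_top.mp <|
    Submodule.eq_top_of_finrank_eq <| h.trans (Module.finrank_pi K).symm

theorem Matrix.of_mulVec_eq_sum_smul {K ι κ : Type*} [CommSemiring K] [Fintype κ]
    (col : κ → ι → K) (c : κ → K) :
    (Matrix.of fun i k => col k i) *ᵥ c = ∑ k, c k • col k := by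
  ext i
  simp only [mulVec, dotProduct, of_apply, Finset.sum_apply, Pi.smul_apply, smul_eq_mul, mul_comm]

section LTI

variable {n m p : ℕ} (A : Matrix (Fin n) (Fin n) ℝ) (B : Matrix (Fin n) (Fin m) ℝ)
  (C : Matrix (Fin p) (Fin n) ℝ) (D : Matrix (Fin p) (Fin m) ℝ)

theorem stateSeq_add_s13 (x0 : Fin n → ℝ) (u : ℕ → Fin m → ℝ) (k i : ℕ) :
    stateSeq A B x0 u (k + i) = stateSeq A B (stateSeq A B x0 u k) (fun j => u (k + j)) i := by
  induction i with
  | zero => rfl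
  | succ i ih => rw [← add_assoc, stateSeq, stateSeq, ih]

theorem outputSeq_add_s13 (x0 : Fin n → ℝ) (u : ℕ → Fin m → ℝ) (k i : ℕ) :
    outputSeq A B C D x0 u (k + i)
      = outputSeq A B C D (stateSeq A B x0 u k) (fun j => u (k + j)) i := by
  rw [outputSeq, outputSeq, stateSeq_add_s13]

theorem stateSeq_sum {ι : Type*} (s : Finset ι) (c : ι → ℝ) (X : ι → Fin n → ℝ)
    (U : ι → ℕ → Fin m → ℝ) (i : ℕ) :
    stateSeq A B (∑ k ∈ s, c k • X k) (∑ k ∈ s, c k • U k) i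
      = ∑ k ∈ s, c k • stateSeq A B (X k) (U k) i := by
  induction i with
  | zero => rfl
  | succ i ih =>
    simp only [stateSeq, ih, Finset.sum_apply, Pi.smul_apply, mulVec_sum, mulVec_smul,
      ← Finset.sum_add_distrib, smul_add]

theorem outputSeq_sum {ι : Type*} (s : Finset ι) (c : ι → ℝ) (X : ι → Fin n → ℝ)
    (U : ι → ℕ → Fin m → ℝ) (i : ℕ) :
    outputSeq A B C D (∑ k ∈ s, c k • X k) (∑ k ∈ s, c k • U k) i
      = ∑ k ∈ s, c k • outputSeq A B C D (X k) (U k) i := by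
  simp only [outputSeq, stateSeq_sum, Finset.sum_apply, Pi.smul_apply, mulVec_sum, mulVec_smul,
    ← Finset.sum_add_distrib, smul_add]

theorem stateSeq_congr (x0 : Fin n → ℝ) {u u' : ℕ → Fin m → ℝ} {i : ℕ}
    (h : ∀ j < i, u j = u' j) : stateSeq A B x0 u i = stateSeq A B x0 u' i := by
  induction i with
  | zero => rfl
  | succ i ih =>
    rw [stateSeq, stateSeq, ih fun j hj => h j (Nat.lt_succ_of_lt hj), h i (Nat.lt_succ_self i)]

theorem outputSeq_congr (x0 : Fin n → ℝ) {u u' : ℕ → Fin m → ℝ} {i : ℕ}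
    (h : ∀ j ≤ i, u j = u' j) : outputSeq A B C D x0 u i = outputSeq A B C D x0 u' i := by
  rw [outputSeq, outputSeq, stateSeq_congr A B x0 fun j hj => h j hj.le, h i le_rfl]

/-- The stacked window `(u_{[0,L-1]}; y_{[0,L-1]})` of the response to `(x0, u)`. -/
noncomputable def ioWindow (L : ℕ) (x0 : Fin n → ℝ) (u : ℕ → Fin m → ℝ) :
    (Fin L × Fin m) ⊕ (Fin L × Fin p) → ℝ :=
  Sum.elim (fun il => u il.1 il.2) (fun ij => outputSeq A B C D x0 u ij.1 ij.2)

theorem mem_trajSet_iff {L : ℕ} {w : (Fin L × Fin m) ⊕ (Fin L × Fin p) → ℝ} :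
    w ∈ TrajSet A B C D L ↔ ∃ x0 u, ioWindow A B C D L x0 u = w := by
  simp only [TrajSet, Set.mem_ofPred_eq, funext_iff, Sum.forall, ioWindow, Sum.elim_inl,
    Sum.elim_inr, Prod.forall, eq_comm]

theorem ioWindow_sum {ι : Type*} (L : ℕ) (s : Finset ι) (c : ι → ℝ) (X : ι → Fin n → ℝ)
    (U : ι → ℕ → Fin m → ℝ) :
    ioWindow A B C D L (∑ k ∈ s, c k • X k) (∑ k ∈ s, c k • U k)
      = ∑ k ∈ s, c k • ioWindow A B C D L (X k) (U k) := by
  ext (⟨i, l⟩ | ⟨i, j⟩) <;>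
    simp [ioWindow, outputSeq_sum, Finset.sum_apply]

theorem ioWindow_congr (L : ℕ) (x0 : Fin n → ℝ) {u u' : ℕ → Fin m → ℝ}
    (h : ∀ j < L, u j = u' j) : ioWindow A B C D L x0 u = ioWindow A B C D L x0 u' := by
  ext (⟨i, l⟩ | ⟨i, j⟩)
  · simp [ioWindow, h i i.isLt]
  · simp only [ioWindow, Sum.elim_inr,
      outputSeq_congr A B C D x0 fun j hj => h j (hj.trans_lt i.isLt)]

/-- The `k`-th column of the Hankel matrix `[H_L(u); H_L(y)]`. -/
theorem ioWindow_shift (L : ℕ) (x0 : Fin n → ℝ) (u : ℕ → Fin m → ℝ) (k : ℕ) :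
    ioWindow A B C D L (stateSeq A B x0 u k) (fun j => u (k + j))
      = Sum.elim (fun il : Fin L × Fin m => u (k + il.1) il.2)
          (fun ij => outputSeq A B C D x0 u (k + ij.1) ij.2) := by
  simp only [ioWindow, outputSeq_add_s13]

end LTI

theorem stmt_13_general {n m p : ℕ}
    (A : Matrix (Fin n) (Fin n) ℝ) (B : Matrix (Fin n) (Fin m) ℝ)
    (C : Matrix (Fin p) (Fin n) ℝ) (D : Matrix (Fin p) (Fin m) ℝ)
    (L N : ℕ)
    (u : ℕ → Fin m → ℝ) (x0 : Fin n → ℝ)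
    (hrank : (Matrix.of fun (i : Fin n ⊕ (Fin L × Fin m)) (k : Fin (N - L + 1)) =>
        Sum.elim (fun i' : Fin n => stateSeq A B x0 u (k : ℕ) i')
          (fun il : Fin L × Fin m => u ((k : ℕ) + (il.1 : ℕ)) il.2) i).rank = m * L + n) :
    {v : (Fin L × Fin m) ⊕ (Fin L × Fin p) → ℝ |
        ∃ c : Fin (N - L + 1) → ℝ,
          (Matrix.of fun (i : (Fin L × Fin m) ⊕ (Fin L × Fin p)) (k : Fin (N - L + 1)) =>
            Sum.elim (fun il : Fin L × Fin m => u ((k : ℕ) + (il.1 : ℕ)) il.2)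
              (fun ij : Fin L × Fin p =>
                outputSeq A B C D x0 u ((k : ℕ) + (ij.1 : ℕ)) ij.2) i).mulVec c = v} =
      TrajSet A B C D L := by
  ext v
  simp only [Set.mem_ofPred_eq, mem_trajSet_iff, Matrix.of_mulVec_eq_sum_smul, ← ioWindow_shift,
    ← ioWindow_sum]
  refine ⟨fun ⟨c, hc⟩ => ⟨_, _, hc⟩, fun ⟨xb, ub, hv⟩ => ?_⟩
  obtain ⟨c, hc⟩ := Matrix.mulVec_surjective_of_rank_eq_card _
    (hrank.trans (by simp [add_comm, mul_comm])) (Sum.elim xb fun il => ub il.1 il.2)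
  rw [Matrix.of_mulVec_eq_sum_smul] at hc
  have hx : ∑ k, c k • stateSeq A B x0 u k = xb := funext fun r => by
    simpa [Finset.sum_apply] using congrFun hc (.inl r)
  have hu : ∀ j < L, (∑ k, c k • fun j => u (k + j)) j = ub j := fun j hj => funext fun l => by
    simpa [Finset.sum_apply] using congrFun hc (.inr (⟨j, hj⟩, l))
  exact ⟨c, by rw [hx, ioWindow_congr A B C D L xb hu, hv]⟩

/-- if the stacked matrix `[H_1(x_{[0,N-L]}); H_L(u)]` has rank `mL + n`, then the
column image of `[H_L(u); H_L(y)]` equals the set `𝒯_L` of length-`L` trajectories. -/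
theorem stmt_13 {n m p : ℕ} (hn : 0 < n) (hm : 0 < m) (hp : 0 < p)
    (A : Matrix (Fin n) (Fin n) ℝ) (B : Matrix (Fin n) (Fin m) ℝ)
    (C : Matrix (Fin p) (Fin n) ℝ) (D : Matrix (Fin p) (Fin m) ℝ)
    (L N : ℕ) (hL : 1 ≤ L) (hLN : L ≤ N)
    (u : ℕ → Fin m → ℝ) (x0 : Fin n → ℝ)
    (hrank : (Matrix.of fun (i : Fin n ⊕ (Fin L × Fin m)) (k : Fin (N - L + 1)) =>
        Sum.elim (fun i' : Fin n => stateSeq A B x0 u (k : ℕ) i')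
          (fun il : Fin L × Fin m => u ((k : ℕ) + (il.1 : ℕ)) il.2) i).rank = m * L + n) :
    {v : (Fin L × Fin m) ⊕ (Fin L × Fin p) → ℝ |
        ∃ c : Fin (N - L + 1) → ℝ,
          (Matrix.of fun (i : (Fin L × Fin m) ⊕ (Fin L × Fin p)) (k : Fin (N - L + 1)) =>
            Sum.elim (fun il : Fin L × Fin m => u ((k : ℕ) + (il.1 : ℕ)) il.2)
              (fun ij : Fin L × Fin p =>
                outputSeq A B C D x0 u ((k : ℕ) + (ij.1 : ℕ)) ij.2) i).mulVec c = v} =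
      TrajSet A B C D L :=
  stmt_13_general A B C D L N u x0 hrank
end
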